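/- arXiv:q-alg/9608010 — 2 statements merged into one kernel-verified Lean document; each statement's English description precedes it below -/
import Mathlib

section
/- Let H be a Hopf algebra over a commutative ring R with comultiplication Δ and antipode S, let n be a natural number, let t : Fin n → H be a family of elements of H, and let ρ : H → Matrix (Fin n) (Fin n) R be an R-linear map. Assume the adjoint-covariance condition: for all x ∈ H and all i, Σ x_(1) · (t i) · S(x_(2)) = Σ_j (ρ x)_{j i} • (t j). Then for all x ∈ H and all i: x · (t i) = Σ_j Σ (ρ(x_(1)))_{j i} • ((t j) · x_(2)). -/
/-!
Coassociativity and the antipode axiom give `Σ x₍₁₎ y S(x₍₂₎) x₍₃₎ = Σ x₍₁₎ y ε(x₍₂₎) = x y`,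
i.e. `x y = Σ (ad x₍₁₎)(y) x₍₂₎`. For `y = tᵢ` the covariance condition expands
`(ad x₍₁₎)(tᵢ)` in the family `t`, and moving the scalars `ρ(x₍₁₎)ⱼᵢ` past `tⱼ` gives the claim.
-/

open TensorProduct

/-- The adjoint action as a linear map `H ⊗ H → H`, sending `x ⊗ y` to
`(ad x)(y) = Σ x_(1) · y · S(x_(2))`. -/
noncomputable def adMap (R H : Type*) [CommRing R] [Ring H] [HopfAlgebra R H] :
    H ⊗[R] H →ₗ[R] H :=
  (LinearMap.mul' R H) ∘ₗ
    (LinearMap.lTensor H ((LinearMap.mul' R H) ∘ₗ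
      (TensorProduct.comm R H H).toLinearMap ∘ₗ
      (LinearMap.rTensor H (HopfAlgebra.antipode (R := R))))) ∘ₗ
    (TensorProduct.assoc R H H H).toLinearMap ∘ₗ
    (LinearMap.rTensor H (Coalgebra.comul (R := R) (A := H)))

/-- The linear functional on matrices picking out the `(j, i)` entry. -/
def entryL (R : Type*) [CommRing R] {n : ℕ} (j i : Fin n) :
    Matrix (Fin n) (Fin n) R →ₗ[R] R where
  toFun m := m j i
  map_add' := by intro x y; simp
  map_smul' := by intro r x; simp

open Coalgebra HopfAlgebra

@[simp]
lemma entryL_apply {R : Type*} [CommRing R] {n : ℕ} (j i : Fin n) (m : Matrix (Fin n) (Fin n) R) :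
    entryL R j i m = m j i :=
  rfl

lemma Coalgebra.sum_counit_smul_left {R A ι : Type*} [CommSemiring R] [AddCommMonoid A]
    [Module R A] [Coalgebra R A] {a : A} (𝓡 : Repr R a ι) :
    ∑ i ∈ 𝓡.index, counit (R := R) (𝓡.right i) • 𝓡.left i = a := by
  simpa only [map_sum, _root_.TensorProduct.rid_tmul, one_smul] using
    congr(_root_.TensorProduct.rid R A $(sum_tmul_counit_eq 𝓡))

lemma HopfAlgebra.sum_mul_mul_antipode_mul_eq_mul {R A ι κ : Type*} [CommSemiring R] [Semiring A]
    [HopfAlgebra R A] {x : A} (𝓡 : Repr R x ι) (𝓡₁ : ∀ i, Repr R (𝓡.left i) κ) (y : A) :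
    ∑ i ∈ 𝓡.index, ∑ j ∈ (𝓡₁ i).index,
      (𝓡₁ i).left j * y * antipode R ((𝓡₁ i).right j) * 𝓡.right i = x * y := by
  -- coassociativity, pushed through `a ⊗ b ⊗ c ↦ a y S(b) c`
  have hcoassoc := sum_map_tmul_tmul_eq (LinearMap.mulRight R y) (antipode R) LinearMap.id x
    (a₁ := 𝓡₁) (a₂ := fun i ↦ ℛ R (𝓡.right i))
  have h := congr(LinearMap.mul' R A (LinearMap.lTensor A (LinearMap.mul' R A) $hcoassoc))
  simp only [map_sum, LinearMap.lTensor_tmul, LinearMap.mul'_apply, LinearMap.mulRight_apply,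
    LinearMap.id_apply] at h
  calc _ = ∑ i ∈ 𝓡.index, ∑ j ∈ (ℛ R (𝓡.right i)).index, 𝓡.left i * y *
          (antipode R ((ℛ R (𝓡.right i)).left j) * (ℛ R (𝓡.right i)).right j) := by
        rw [h]; simp only [mul_assoc]
    _ = ∑ i ∈ 𝓡.index, counit (R := R) (𝓡.right i) • 𝓡.left i * y := by
        simp only [← Finset.mul_sum, sum_antipode_mul_eq_smul, mul_smul_comm, mul_one,
          smul_mul_assoc]
    _ = x * y := by rw [← Finset.sum_mul, sum_counit_smul_left]

section Adjoint

variable {R H ι : Type*} [CommRing R] [Ring H] [HopfAlgebra R H]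

lemma adMap_tmul {x : H} (𝓡 : Repr R x ι) (y : H) :
    adMap R H (x ⊗ₜ y) = ∑ i ∈ 𝓡.index, 𝓡.left i * y * antipode R (𝓡.right i) := by
  simp [adMap, ← 𝓡.eq, map_sum, sum_tmul, mul_assoc]

lemma sum_adMap_tmul_mul {x : H} (𝓡 : Repr R x ι) (y : H) :
    ∑ i ∈ 𝓡.index, adMap R H (𝓡.left i ⊗ₜ y) * 𝓡.right i = x * y := by
  simp only [adMap_tmul (ℛ R _), Finset.sum_mul]
  exact sum_mul_mul_antipode_mul_eq_mul 𝓡 (fun i ↦ ℛ R (𝓡.left i)) y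

end Adjoint

/-- if the family `t : Fin n → H` is adjoint-covariant with representation
matrix `ρ`, i.e. `Σ x_(1) · (t i) · S(x_(2)) = Σ_j (ρ x)_{j i} • (t j)`, then
`x · (t i) = Σ_j Σ (ρ(x_(1)))_{j i} • ((t j) · x_(2))`. -/
theorem mul_eq_adjoint_covariant (R H : Type*) [CommRing R] [Ring H] [HopfAlgebra R H]
    {n : ℕ} (t : Fin n → H) (ρ : H →ₗ[R] Matrix (Fin n) (Fin n) R)
    (hcov : ∀ (x : H) (i : Fin n), adMap R H (x ⊗ₜ[R] t i) = ∑ j, ρ x j i • t j) :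
    ∀ (x : H) (i : Fin n),
      x * t i =
        ∑ j, t j *
          (TensorProduct.lid R H)
            ((LinearMap.rTensor H ((entryL R j i) ∘ₗ ρ)) (Coalgebra.comul x)) := by
  intro x i
  let 𝓡 := ℛ R x
  calc x * t i = ∑ a ∈ 𝓡.index, adMap R H (𝓡.left a ⊗ₜ t i) * 𝓡.right a :=
        (sum_adMap_tmul_mul 𝓡 (t i)).symm
    _ = ∑ j, t j * ∑ a ∈ 𝓡.index, ρ (𝓡.left a) j i • 𝓡.right a := by
        simp only [hcov, Finset.sum_mul, Finset.mul_sum, smul_mul_assoc, mul_smul_comm]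
        exact Finset.sum_comm
    _ = _ := by simp [← 𝓡.eq, map_sum]
end

section
/- Let H be a bialgebra over a commutative ring R with comultiplication Δ, let R̃ ∈ H ⊗ H be an invertible element satisfying R̃ · Δ(x) = Δ^op(x) · R̃ for all x ∈ H (where Δ^op is the flip of Δ), and let ρ : H → Matrix (Fin n) (Fin n) k be a unital R-algebra homomorphism into matrices over a commutative R-algebra k. Write M = (ρ ⊗ ρ) : H ⊗ H → Matrix (Fin n × Fin n) (Fin n × Fin n) k for the induced algebra map (identifying Matrix n k ⊗ Matrix n k with matrices indexed by pairs) and Rm = M(R̃). Then Rm is invertible and for all x ∈ H: M(Δ(x)) = Rm⁻¹ · M(Δ^op(x)) · Rm. Equivalently, the matrix-coefficient functionals T_a^b(x) = ρ(x)_a^b satisfy, in the convolution algebra of functionals with (f ⋆ g)(x) = Σ f(x_(1)) g(x_(2)): T_a^b ⋆ T_c^d = Σ (Rm⁻¹)_{(a,c)}^{(a',c')} (T_{c'}^{d'} ⋆ T_{a'}^{b'}) Rm_{(b',d')}^{(b,d)}. -/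
/-!
By the mixed-product property of the Kronecker product, `M = ρ ⊗ ρ` is an algebra
homomorphism. It therefore carries the inverse pair `R̃, R̃'` to an inverse pair of matrices and
the intertwining relation `R̃ Δ(x) = Δ^op(x) R̃` to `Rm M(Δ(x)) = M(Δ^op(x)) Rm`, which is the
RTT relation after multiplying by `Rm⁻¹` on the left.
-/

open TensorProduct

open scoped Kronecker

/-- The map `M = ρ ⊗ ρ : H ⊗ H → Matrix (Fin n × Fin n) (Fin n × Fin n) k` induced by a
matrix representation `ρ` of `H`, identifying `Matrix n k ⊗ Matrix n k` with matrices
indexed by pairs via the Kronecker product. -/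
noncomputable def Mmap (R k H : Type*) [CommRing R] [CommRing k] [Algebra R k]
    [Ring H] [Algebra R H] {n : ℕ} (ρ : H →ₐ[R] Matrix (Fin n) (Fin n) k) :
    H ⊗[R] H →ₗ[R] Matrix (Fin n × Fin n) (Fin n × Fin n) k :=
  TensorProduct.lift
    ((Matrix.kroneckerMapBilinear (LinearMap.mul R k)).compl₁₂ ρ.toLinearMap ρ.toLinearMap)

theorem SemiconjBy.eq_mul_mul_of_mul_eq_one {M : Type*} [Monoid M] {r r' a b : M}
    (hr : r' * r = 1) (h : SemiconjBy r a b) : a = r' * b * r := by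
  rw [mul_assoc, ← h.eq, ← mul_assoc, hr, one_mul]

section

variable {R k H : Type*} [CommRing R] [CommRing k] [Algebra R k] [Ring H] [Algebra R H] {n : ℕ}
  (ρ : H →ₐ[R] Matrix (Fin n) (Fin n) k)

theorem Mmap_tmul (a b : H) : Mmap R k H ρ (a ⊗ₜ b) = ρ a ⊗ₖ ρ b := rfl

noncomputable def Mmap.toAlgHom : H ⊗[R] H →ₐ[R] Matrix (Fin n × Fin n) (Fin n × Fin n) k :=
  Algebra.TensorProduct.algHomOfLinearMapTensorProduct (Mmap R k H ρ)
    (fun _ _ _ _ => by simp only [Mmap_tmul, map_mul, Matrix.mul_kronecker_mul])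
    (by rw [Mmap_tmul, map_one, Matrix.one_kronecker_one])

theorem Mmap.toAlgHom_apply (x : H ⊗[R] H) : Mmap.toAlgHom ρ x = Mmap R k H ρ x := rfl

end

/-- the RTT relation.  If `R̃ ∈ H ⊗ H` is invertible (with inverse `R̃'`)
and satisfies `R̃ · Δ(x) = Δ^op(x) · R̃`, and `ρ` is a unital algebra map into matrices,
then `Rm = M(R̃)` is invertible (with inverse `M(R̃')`) and
`M(Δ(x)) = Rm⁻¹ · M(Δ^op(x)) · Rm` for all `x ∈ H`. -/
theorem rtt_relation (R k H : Type*) [CommRing R] [CommRing k] [Algebra R k]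
    [Ring H] [Bialgebra R H] {n : ℕ}
    (Rt Rt' : H ⊗[R] H) (hinv1 : Rt * Rt' = 1) (hinv2 : Rt' * Rt = 1)
    (hqc : ∀ x : H,
      Rt * Coalgebra.comul (R := R) x =
        (TensorProduct.comm R H H) (Coalgebra.comul (R := R) x) * Rt)
    (ρ : H →ₐ[R] Matrix (Fin n) (Fin n) k) :
    Mmap R k H ρ Rt * Mmap R k H ρ Rt' = 1 ∧
    Mmap R k H ρ Rt' * Mmap R k H ρ Rt = 1 ∧
    ∀ x : H,
      Mmap R k H ρ (Coalgebra.comul (R := R) x) =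
        Mmap R k H ρ Rt' *
          Mmap R k H ρ ((TensorProduct.comm R H H) (Coalgebra.comul (R := R) x)) *
          Mmap R k H ρ Rt := by
  simp only [← Mmap.toAlgHom_apply]
  have hRm_inv : Mmap.toAlgHom ρ Rt' * Mmap.toAlgHom ρ Rt = 1 := by rw [← map_mul, hinv2, map_one]
  refine ⟨by rw [← map_mul, hinv1, map_one], hRm_inv, fun x =>
    (SemiconjBy.map (hqc x) (Mmap.toAlgHom ρ)).eq_mul_mul_of_mul_eq_one hRm_inv⟩
end
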